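/- For every natural number n ≥ 1, real ω, and sufficiently smooth f, the operator identity (t·d/dt) ∘ (ω + D_q)^n = (ω + D_q)^n ∘ (t·d/dt) − n·(ω + D_q)^{n−1} ∘ D_q holds when applied to f. -/

import Mathlib

/-- Jackson q-derivative. -/
noncomputable def Dq (q : ℝ) (f : ℝ → ℝ) (t : ℝ) : ℝ :=
  (f (q * t) - f t) / ((q - 1) * t)

/-- The operator ω + D_q acting on functions. -/
noncomputable def qshift (q ω : ℝ) (f : ℝ → ℝ) : ℝ → ℝ :=
  fun t => ω * f t + Dq q f t

section aux
variable (q ω : ℝ)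

lemma Dq_qshift_comm (g : ℝ → ℝ) : Dq q (qshift q ω g) = qshift q ω (Dq q g) := by
  funext t
  simp only [Dq, qshift]
  ring

lemma Dq_qshift_iter_comm (g : ℝ → ℝ) (n : ℕ) :
    Dq q ((qshift q ω)^[n] g) = (qshift q ω)^[n] (Dq q g) := by
  induction n with
  | zero => rfl
  | succ n ih =>
    rw [Function.iterate_succ_apply', Dq_qshift_comm, ih]
    exact (Function.iterate_succ_apply' _ _ _).symm

lemma qshift_hasDerivAt (hq : 1 < q) (g : ℝ → ℝ) (hg : ∀ x : ℝ, x ≠ 0 → DifferentiableAt ℝ g x)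
    (t : ℝ) (ht : t ≠ 0) :
    HasDerivAt (qshift q ω g)
      (ω * deriv g t +
        ((deriv g (q * t) * q - deriv g t) * ((q - 1) * t) - (g (q * t) - g t) * (q - 1)) /
          ((q - 1) * t) ^ 2) t := by
  have hq1 : q - 1 ≠ 0 := by linarith
  have hqt : q * t ≠ 0 := mul_ne_zero (by linarith) ht
  have h1 : HasDerivAt g (deriv g t) t := (hg t ht).hasDerivAt
  have h2 : HasDerivAt g (deriv g (q * t)) (q * t) := (hg (q * t) hqt).hasDerivAt
  have hlin : HasDerivAt (fun s : ℝ => q * s) q t := by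
    simpa using (hasDerivAt_id t).const_mul q
  have h3 : HasDerivAt (fun s => g (q * s)) (deriv g (q * t) * q) t := h2.comp t hlin
  have hnum : HasDerivAt (fun s => g (q * s) - g s) (deriv g (q * t) * q - deriv g t) t :=
    h3.sub h1
  have hden : HasDerivAt (fun s : ℝ => (q - 1) * s) (q - 1) t := by
    simpa using (hasDerivAt_id t).const_mul (q - 1)
  have hdiv := hnum.div hden (mul_ne_zero hq1 ht)
  exact (h1.const_mul ω).add hdiv

lemma qshift_differentiableAt (hq : 1 < q) (g : ℝ → ℝ)
    (hg : ∀ x : ℝ, x ≠ 0 → DifferentiableAt ℝ g x) :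
    ∀ x : ℝ, x ≠ 0 → DifferentiableAt ℝ (qshift q ω g) x :=
  fun x hx => (qshift_hasDerivAt q ω hq g hg x hx).differentiableAt

lemma qshift_iter_differentiableAt (hq : 1 < q) (g : ℝ → ℝ)
    (hg : ∀ x : ℝ, x ≠ 0 → DifferentiableAt ℝ g x) (n : ℕ) :
    ∀ x : ℝ, x ≠ 0 → DifferentiableAt ℝ ((qshift q ω)^[n] g) x := by
  induction n with
  | zero => exact hg
  | succ n ih =>
    rw [Function.iterate_succ_apply']
    exact qshift_differentiableAt q ω hq _ ih

/-- The key single-step commutator. -/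
lemma key (hq : 1 < q) (g : ℝ → ℝ) (hg : ∀ x : ℝ, x ≠ 0 → DifferentiableAt ℝ g x)
    (t : ℝ) (ht : t ≠ 0) :
    t * deriv (qshift q ω g) t
      = qshift q ω (fun s => s * deriv g s) t - Dq q g t := by
  have hq1 : q - 1 ≠ 0 := by linarith
  rw [(qshift_hasDerivAt q ω hq g hg t ht).deriv]
  simp only [qshift, Dq]
  field_simp
  ring

lemma main_aux (hq : 1 < q) (f : ℝ → ℝ)
    (hf : ∀ x : ℝ, x ≠ 0 → DifferentiableAt ℝ f x) (n : ℕ) (hn : 1 ≤ n) :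
    ∀ t : ℝ, t ≠ 0 →
    t * deriv ((qshift q ω)^[n] f) t
      = (qshift q ω)^[n] (fun s => s * deriv f s) t
        - (n : ℝ) * (qshift q ω)^[n - 1] (Dq q f) t := by
  induction n with
  | zero => omega
  | succ n ih =>
    intro t ht
    rcases Nat.lt_or_ge n 1 with h1 | hn1
    · -- n = 0
      have hn0 : n = 0 := by omega
      subst hn0
      simpa using key q ω hq f hf t ht
    · have hqt : q * t ≠ 0 := mul_ne_zero (by linarith) ht
      have hgdiff := qshift_iter_differentiableAt q ω hq f hf n
      have hA := ih hn1 t ht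
      have hAq := ih hn1 (q * t) hqt
      have hiter : (qshift q ω)^[n] (Dq q f)
          = qshift q ω ((qshift q ω)^[n - 1] (Dq q f)) := by
        conv_lhs => rw [show n = (n - 1) + 1 by omega]
        rw [Function.iterate_succ_apply']
      rw [Function.iterate_succ_apply', key q ω hq _ hgdiff t ht,
        Function.iterate_succ_apply', Nat.add_sub_cancel, Dq_qshift_iter_comm, hiter]
      simp only [qshift, Dq]
      rw [hA, hAq]
      push_cast
      ring

end aux

/-- For n ≥ 1, the operator identity
(t·d/dt) ∘ (ω + D_q)^n = (ω + D_q)^n ∘ (t·d/dt) − n·(ω + D_q)^{n−1} ∘ D_q. -/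
theorem euler_qshift_pow_commutator (q ω : ℝ) (hq : 1 < q) (f : ℝ → ℝ)
    (hf : ContDiff ℝ (⊤ : ℕ∞) f) (n : ℕ) (hn : 1 ≤ n) (t : ℝ) (ht : t ≠ 0) :
    t * deriv ((qshift q ω)^[n] f) t
      = (qshift q ω)^[n] (fun s => s * deriv f s) t
        - (n : ℝ) * (qshift q ω)^[n - 1] (Dq q f) t := by
  exact main_aux q ω hq f (fun x _ => (hf.differentiable (by simp)).differentiableAt) n hn t ht
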